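/- arXiv:2202.02127 — 3 statements merged into one kernel-verified Lean document; each statement's English description precedes it below -/
import Mathlib

section
/- A ring R is Zhou nil-clean if and only if every element of R is the sum of a 5-potent and a nilpotent that commute with each other. -/
/-- A ring is Zhou nil-clean if every element is the sum of two tripotents
and a nilpotent that pairwise commute. -/
def ZhouNilClean (R : Type*) [Ring R] : Prop :=
  ∀ a : R, ∃ p q w : R, p ^ 3 = p ∧ q ^ 3 = q ∧ IsNilpotent w ∧
    Commute p q ∧ Commute p w ∧ Commute q w ∧ a = p + q + w

/-!
Both conditions force 30 to be nilpotent: for a Zhou decomposition 3 = p + q + w, the element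
p + q is a root of X(X² - 1)(X² - 4), whose value at 3 is 120; and if every b⁵ - b is nilpotent,
so is 2⁵ - 2 = 30. The elements of a decomposition lie in a commutative subring, and there a
Bézout identity between powers of 2 and 15 gives an idempotent e such that 2 is nilpotent on the
e-part and 15 on the (1 - e)-part. On each part an element that is n-potent modulo nilpotents
(n = 2, 3, 5) is lifted to an honest n-potent by Newton's method, the relevant derivative being a
unit there, and the lifts are glued along e. Going forward, a sum s = p + q of commuting
tripotents has s⁵ - s = 15m with m = pq(p + q) and m³ = 4m, so (15m)³ is a multiple of 30.
Going back, on the 15-part a 5-potent y is the sum (2y - y³) + (y³ - y) of two tripotents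
modulo nilpotents, once the nilpotency of (y ± 1)⁵ - (y ± 1) is used.
-/

open Polynomial

section CommRing

variable {S : Type*} [CommRing S]

theorem isUnit_of_isNilpotent_pow_sub_one {u : S} {k : ℕ} (hk : k ≠ 0)
    (h : IsNilpotent (u ^ k - 1)) : IsUnit u :=
  (isUnit_pow_iff hk).mp (by simpa using h.isUnit_add_one)

theorem exists_pow_eq_self_isNilpotent_sub {x : S} {k : ℕ} (h : IsNilpotent (x ^ k - x))
    (h' : IsUnit (k * x ^ (k - 1) - 1)) : ∃ r, r ^ k = r ∧ IsNilpotent (x - r) := by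
  obtain ⟨r, ⟨hxr, hr⟩, -⟩ := existsUnique_nilpotent_sub_and_aeval_eq_zero
    (x := x) (P := (X ^ k - X : ℤ[X])) (by simpa using h) (by simpa [derivative_X_pow] using h')
  exact ⟨r, by simpa [sub_eq_zero] using hr, hxr⟩

theorem exists_isIdempotentElem_isNilpotent_sub_of_isNilpotent_two_mul {x : S}
    (h2 : IsNilpotent (2 * x)) (h : IsNilpotent (x ^ 5 - x)) :
    ∃ r, IsIdempotentElem r ∧ IsNilpotent (x - r) := by
  have hsq : IsNilpotent ((x ^ 2 - x) ^ 4) := by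
    rw [show (x ^ 2 - x) ^ 4 = (x ^ 5 - x) * (x ^ 3 - 4 * x ^ 2 + 6 * x - 4)
        + 2 * x * (x ^ 3 - 2 * x ^ 2 + 3 * x - 2) by ring]
    exact (Commute.all _ _).isNilpotent_add ((Commute.all _ _).isNilpotent_mul_right h)
      ((Commute.all _ _).isNilpotent_mul_right h2)
  obtain ⟨r, hr, hxr⟩ := exists_pow_eq_self_isNilpotent_sub (k := 2)
    ((IsNilpotent.pow_iff_pos four_ne_zero).1 hsq) (by simpa using h2.isUnit_sub_one)
  exact ⟨r, by rwa [IsIdempotentElem, ← sq], hxr⟩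

theorem exists_pow_three_eq_self_isNilpotent_sub_of_isNilpotent_fifteen_mul {x : S}
    (h15 : IsNilpotent (15 * x)) (h : IsNilpotent (x ^ 3 - x)) :
    ∃ r, r ^ 3 = r ∧ IsNilpotent (x - r) := by
  refine exists_pow_eq_self_isNilpotent_sub h (isUnit_of_isNilpotent_pow_sub_one four_ne_zero ?_)
  rw [show (((3 : ℕ) : S) * x ^ (3 - 1) - 1) ^ 4 - 1
      = (x ^ 3 - x) * (81 * x ^ 5 - 27 * x ^ 3 + 27 * x) + 15 * x * x by push_cast; ring]
  exact (Commute.all _ _).isNilpotent_add ((Commute.all _ _).isNilpotent_mul_right h)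
    ((Commute.all _ _).isNilpotent_mul_right h15)

theorem exists_pow_five_eq_self_isNilpotent_sub_of_isNilpotent_fifteen_mul {x : S}
    (h15 : IsNilpotent (15 * x)) (h : IsNilpotent (x ^ 5 - x)) :
    ∃ r, r ^ 5 = r ∧ IsNilpotent (x - r) := by
  refine exists_pow_eq_self_isNilpotent_sub h (isUnit_of_isNilpotent_pow_sub_one two_ne_zero ?_)
  rw [show (((5 : ℕ) : S) * x ^ (5 - 1) - 1) ^ 2 - 1
      = (x ^ 5 - x) * (25 * x ^ 3) + 15 * x * x ^ 3 by push_cast; ring]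
  exact (Commute.all _ _).isNilpotent_add ((Commute.all _ _).isNilpotent_mul_right h)
    ((Commute.all _ _).isNilpotent_mul_right h15)

theorem exists_isIdempotentElem_isNilpotent_mul {m n : ℕ} (hmn : m.Coprime n)
    (h : IsNilpotent ((m * n : ℕ) : S)) :
    ∃ e : S, IsIdempotentElem e ∧ IsNilpotent (m * e) ∧ IsNilpotent (n * (1 - e)) := by
  obtain ⟨M, hM⟩ := h
  obtain ⟨u, v, huv⟩ := (hmn.cast (R := S)).pow (m := M + 1) (n := M + 1)
  push_cast at hM
  have hmn : IsNilpotent ((m : S) * n) := ⟨M, hM⟩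
  -- `e * (1 - e)` is a multiple of `(m * n) ^ (M + 1) = 0`.
  refine ⟨v * n ^ (M + 1), ?_, ?_, ?_⟩
  · unfold IsIdempotentElem
    linear_combination (v * n ^ (M + 1)) * huv - u * v * m * n * hM
  · rw [show (m : S) * (v * n ^ (M + 1)) = m * n * (v * n ^ M) by ring]
    exact (Commute.all _ _).isNilpotent_mul_right hmn
  · rw [show (n : S) * (1 - v * n ^ (M + 1)) = m * n * (u * m ^ M) by
      linear_combination (-n : S) * huv]
    exact (Commute.all _ _).isNilpotent_mul_right hmn

theorem exists_isIdempotentElem_of_isNilpotent_thirty {c : S} (h30 : IsNilpotent (30 : S)) :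
    ∃ e : S, IsIdempotentElem e ∧ IsNilpotent (2 * (c * e)) ∧
      IsNilpotent (15 * (c * (1 - e))) := by
  obtain ⟨e, he, h2, h15⟩ := exists_isIdempotentElem_isNilpotent_mul (S := S) (m := 2) (n := 15)
    (by norm_num) (by norm_num; exact h30)
  push_cast at h2 h15
  refine ⟨e, he, ?_, ?_⟩
  · rw [mul_left_comm]; exact (Commute.all _ _).isNilpotent_mul_left h2
  · rw [mul_left_comm]; exact (Commute.all _ _).isNilpotent_mul_left h15

namespace IsIdempotentElem

variable {e : S} (he : IsIdempotentElem e)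
include he

theorem mul_pow (x : S) {k : ℕ} (hk : k ≠ 0) : (x * e) ^ k = x ^ k * e := by
  rw [_root_.mul_pow, he.pow_eq hk]

theorem isNilpotent_mul_pow_sub {x : S} {k : ℕ} (hk : k ≠ 0) (h : IsNilpotent (x ^ k - x)) :
    IsNilpotent ((x * e) ^ k - x * e) := by
  rw [he.mul_pow x hk, ← sub_mul]
  exact (Commute.all _ _).isNilpotent_mul_right h

theorem mul_add_mul_one_sub_pow (u v : S) (n : ℕ) :
    (u * e + v * (1 - e)) ^ (n + 1) = u ^ (n + 1) * e + v ^ (n + 1) * (1 - e) := by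
  induction n with
  | zero => simp
  | succ n ih =>
    rw [pow_succ, ih]
    linear_combination (u ^ (n + 1) - v ^ (n + 1)) * (u - v) * he.eq

theorem mul_add_mul_one_sub_pow_eq_self {u v : S} {k : ℕ} (hk : k ≠ 0) (hu : u ^ k = u)
    (hv : v ^ k = v) : (u * e + v * (1 - e)) ^ k = u * e + v * (1 - e) := by
  obtain ⟨n, rfl⟩ := Nat.exists_eq_add_one_of_ne_zero hk
  rw [he.mul_add_mul_one_sub_pow, hu, hv]

theorem isNilpotent_sub_mul_add_mul_one_sub {a u v : S} (hu : IsNilpotent (a * e - u))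
    (hv : IsNilpotent (a * (1 - e) - v)) : IsNilpotent (a - (u * e + v * (1 - e))) := by
  rw [show a - (u * e + v * (1 - e)) = (a * e - u) * e + (a * (1 - e) - v) * (1 - e) by
    linear_combination (-2 * a) * he.eq]
  exact (Commute.all _ _).isNilpotent_add ((Commute.all _ _).isNilpotent_mul_right hu)
    ((Commute.all _ _).isNilpotent_mul_right hv)

end IsIdempotentElem

theorem isNilpotent_thirty_of_add_eq_three {p q w : S} (hp : p ^ 3 = p) (hq : q ^ 3 = q)
    (hw : IsNilpotent w) (h : p + q + w = 3) : IsNilpotent (30 : S) := by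
  have hs : (3 - w) ^ 5 - 5 * (3 - w) ^ 3 + 4 * (3 - w) = 0 := by
    rw [show 3 - w = p + q by linear_combination -h]
    linear_combination (p ^ 2 + 5 * p * q + 10 * q ^ 2 - 4) * hp
      + (10 * p ^ 2 + 5 * p * q + q ^ 2 - 4) * hq
  have h120 : IsNilpotent (120 : S) := by
    rw [show (120 : S) = w * (274 - 225 * w + 85 * w ^ 2 - 15 * w ^ 3 + w ^ 4) by
      linear_combination hs]
    exact (Commute.all _ _).isNilpotent_mul_right hw
  refine (IsNilpotent.pow_iff_pos three_ne_zero).1 ?_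
  rw [show (30 : S) ^ 3 = 120 * 225 by norm_num]
  exact (Commute.all _ _).isNilpotent_mul_right h120

theorem isNilpotent_fifteen_mul_of_pow_three_eq {m : S} (h30 : IsNilpotent (30 : S))
    (hm : m ^ 3 = 4 * m) : IsNilpotent (15 * m) := by
  refine (IsNilpotent.pow_iff_pos three_ne_zero).1 ?_
  rw [show (15 * m) ^ 3 = 30 * (450 * m) by linear_combination 3375 * hm]
  exact (Commute.all _ _).isNilpotent_mul_right h30

theorem isNilpotent_add_pow_five_sub_of_pow_three_eq_self {p q : S}
    (h30 : IsNilpotent (30 : S)) (hp : p ^ 3 = p) (hq : q ^ 3 = q) :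
    IsNilpotent ((p + q) ^ 5 - (p + q)) := by
  rw [show (p + q) ^ 5 - (p + q) = 15 * (p * q * (p + q)) by
    linear_combination (p ^ 2 + 5 * p * q + 10 * q ^ 2 + 1) * hp
      + (10 * p ^ 2 + 5 * p * q + q ^ 2 + 1) * hq]
  refine isNilpotent_fifteen_mul_of_pow_three_eq h30 ?_
  linear_combination
    (q ^ 6 + 3 * p * q ^ 5 + 3 * q ^ 4 + 3 * p ^ 2 * q ^ 4 + p * q ^ 3 + p ^ 3 * q ^ 3) * hp
      + (p * q ^ 3 + 3 * p ^ 2 * q ^ 2 + 4 * p * q + 4 * p ^ 2) * hq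

theorem isNilpotent_add_pow_five_sub {s w : S} (hs : IsNilpotent (s ^ 5 - s))
    (hw : IsNilpotent w) : IsNilpotent ((s + w) ^ 5 - (s + w)) := by
  rw [show (s + w) ^ 5 - (s + w) = (s ^ 5 - s)
      + w * (5 * s ^ 4 + 10 * s ^ 3 * w + 10 * s ^ 2 * w ^ 2 + 5 * s * w ^ 3 + w ^ 4 - 1) by ring]
  exact (Commute.all _ _).isNilpotent_add hs ((Commute.all _ _).isNilpotent_mul_right hw)

theorem exists_pow_five_eq_self_isNilpotent_sub {a : S} (h30 : IsNilpotent (30 : S))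
    (ha : IsNilpotent (a ^ 5 - a)) : ∃ P, P ^ 5 = P ∧ IsNilpotent (a - P) := by
  obtain ⟨e, he, h2, h15⟩ := exists_isIdempotentElem_of_isNilpotent_thirty (c := a) h30
  obtain ⟨E, hE, haE⟩ := exists_isIdempotentElem_isNilpotent_sub_of_isNilpotent_two_mul h2
    (he.isNilpotent_mul_pow_sub (by norm_num) ha)
  obtain ⟨Q, hQ, haQ⟩ := exists_pow_five_eq_self_isNilpotent_sub_of_isNilpotent_fifteen_mul h15
    (he.one_sub.isNilpotent_mul_pow_sub (by norm_num) ha)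
  exact ⟨E * e + Q * (1 - e), he.mul_add_mul_one_sub_pow_eq_self (by norm_num)
    (hE.pow_eq (by norm_num)) hQ, he.isNilpotent_sub_mul_add_mul_one_sub haE haQ⟩

theorem exists_two_tripotents_isNilpotent_sub_of_isNilpotent_fifteen_mul {y : S}
    (hy : y ^ 5 = y) (h15 : IsNilpotent (15 * y)) (hG : IsNilpotent (20 * y ^ 3 + 10 * y)) :
    ∃ q₁ q₂ : S, q₁ ^ 3 = q₁ ∧ q₂ ^ 3 = q₂ ∧ IsNilpotent (y - (q₁ + q₂)) := by
  obtain ⟨q₁, hq₁, hyq₁⟩ :=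
    exists_pow_three_eq_self_isNilpotent_sub_of_isNilpotent_fifteen_mul (x := 2 * y - y ^ 3)
    (by rw [show 15 * (2 * y - y ^ 3) = 15 * y * (2 - y ^ 2) by ring]
        exact (Commute.all _ _).isNilpotent_mul_right h15)
    (by rw [show (2 * y - y ^ 3) ^ 3 - (2 * y - y ^ 3) = 15 * y * (y ^ 2 - 1) by
          linear_combination (-y ^ 4 + 6 * y ^ 2 - 13) * hy]
        exact (Commute.all _ _).isNilpotent_mul_right h15)
  obtain ⟨q₂, hq₂, hyq₂⟩ :=
    exists_pow_three_eq_self_isNilpotent_sub_of_isNilpotent_fifteen_mul (x := y ^ 3 - y)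
    (by rw [show 15 * (y ^ 3 - y) = 15 * y * (y ^ 2 - 1) by ring]
        exact (Commute.all _ _).isNilpotent_mul_right h15)
    (by rw [show (y ^ 3 - y) ^ 3 - (y ^ 3 - y)
            = 15 * y * (y ^ 2 + 1) - (20 * y ^ 3 + 10 * y) by
          linear_combination (y ^ 4 - 3 * y ^ 2 + 4) * hy]
        exact (Commute.all _ _).isNilpotent_sub ((Commute.all _ _).isNilpotent_mul_right h15) hG)
  refine ⟨q₁, q₂, hq₁, hq₂, ?_⟩
  rw [show y - (q₁ + q₂) = (2 * y - y ^ 3 - q₁) + (y ^ 3 - y - q₂) by ring]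
  exact (Commute.all _ _).isNilpotent_add hyq₁ hyq₂

theorem exists_two_tripotents_isNilpotent_sub {p : S} (h5 : ∀ b : S, IsNilpotent (b ^ 5 - b))
    (hp : p ^ 5 = p) :
    ∃ q₁ q₂ : S, q₁ ^ 3 = q₁ ∧ q₂ ^ 3 = q₂ ∧ IsNilpotent (p - (q₁ + q₂)) := by
  have h30 : IsNilpotent (30 : S) := by
    convert h5 2 using 1
    norm_num
  have hG : IsNilpotent (20 * p ^ 3 + 10 * p) := by
    rw [show 20 * p ^ 3 + 10 * p = ((p + 1) ^ 5 - (p + 1)) + ((p - 1) ^ 5 - (p - 1)) by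
      linear_combination (-2) * hp]
    exact (Commute.all _ _).isNilpotent_add (h5 _) (h5 _)
  obtain ⟨e, he, h2, h15⟩ := exists_isIdempotentElem_of_isNilpotent_thirty (c := p) h30
  obtain ⟨E, hE, hpE⟩ := exists_isIdempotentElem_isNilpotent_sub_of_isNilpotent_two_mul h2
    (he.isNilpotent_mul_pow_sub (by norm_num) (by simp [hp]))
  obtain ⟨q₁, q₂, hq₁, hq₂, hpq⟩ :=
    exists_two_tripotents_isNilpotent_sub_of_isNilpotent_fifteen_mul
      (by rw [he.one_sub.mul_pow p (by norm_num), hp]) h15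
      (by rw [he.one_sub.mul_pow p three_ne_zero, show 20 * (p ^ 3 * (1 - e)) + 10 * (p * (1 - e))
            = (20 * p ^ 3 + 10 * p) * (1 - e) by ring]
          exact (Commute.all _ _).isNilpotent_mul_right hG)
  refine ⟨E * e + q₁ * (1 - e), q₂ * (1 - e),
    he.mul_add_mul_one_sub_pow_eq_self three_ne_zero (hE.pow_eq three_ne_zero) hq₁,
    by rw [he.one_sub.mul_pow _ three_ne_zero, hq₂], ?_⟩
  rw [show E * e + q₁ * (1 - e) + q₂ * (1 - e) = E * e + (q₁ + q₂) * (1 - e) by ring]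
  exact he.isNilpotent_sub_mul_add_mul_one_sub hpE hpq

end CommRing

section Ring

open scoped IsMulCommutative

variable {R : Type*} [Ring R]

theorem Subring.isNilpotent_coe_iff {T : Subring R} {x : T} :
    IsNilpotent (x : R) ↔ IsNilpotent x :=
  IsNilpotent.map_iff T.subtype_injective

theorem Subring.commute_coe {T : Subring R} [IsMulCommutative T] (x y : T) :
    Commute (x : R) y :=
  (Commute.all x y).map T.subtype

theorem exists_isMulCommutative_subring {x y z : R} (hxy : Commute x y) (hxz : Commute x z)
    (hyz : Commute y z) :
    ∃ T : Subring R, IsMulCommutative T ∧ x ∈ T ∧ y ∈ T ∧ z ∈ T := by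
  refine ⟨Subring.closure {x, y, z}, Subring.isMulCommutative_closure ?_,
    Subring.subset_closure (by simp), Subring.subset_closure (by simp),
    Subring.subset_closure (by simp)⟩
  simp only [Set.mem_insert_iff, Set.mem_singleton_iff]
  rintro a (rfl | rfl | rfl) b (rfl | rfl | rfl) <;>
    first
    | rfl | exact hxy | exact hxy.symm | exact hxz | exact hxz.symm | exact hyz | exact hyz.symm

theorem ZhouNilClean.isNilpotent_thirty (h : ZhouNilClean R) : IsNilpotent (30 : R) := by
  obtain ⟨p, q, w, hp, hq, hw, hpq, hpw, hqw, h3⟩ := h 3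
  obtain ⟨T, _, hpT, hqT, hwT⟩ := exists_isMulCommutative_subring hpq hpw hqw
  lift p to T using hpT
  lift q to T using hqT
  lift w to T using hwT
  have h30 := isNilpotent_thirty_of_add_eq_three (by exact_mod_cast hp) (by exact_mod_cast hq)
    (Subring.isNilpotent_coe_iff.mp hw) (T.subtype_injective (by rw [map_ofNat]; exact h3.symm))
  simpa only [map_ofNat] using h30.map T.subtype

theorem ZhouNilClean.exists_pow_five_eq_self_add (h : ZhouNilClean R) (a : R) :
    ∃ P w : R, P ^ 5 = P ∧ IsNilpotent w ∧ Commute P w ∧ a = P + w := by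
  obtain ⟨p, q, w, hp, hq, hw, hpq, hpw, hqw, rfl⟩ := h a
  obtain ⟨T, _, hpT, hqT, hwT⟩ := exists_isMulCommutative_subring hpq hpw hqw
  lift p to T using hpT
  lift q to T using hqT
  lift w to T using hwT
  have h30 : IsNilpotent (30 : T) := Subring.isNilpotent_coe_iff.mp
    (by rw [← T.coe_subtype, map_ofNat]; exact h.isNilpotent_thirty)
  obtain ⟨P, hP, hPn⟩ := exists_pow_five_eq_self_isNilpotent_sub h30
    (isNilpotent_add_pow_five_sub
      (isNilpotent_add_pow_five_sub_of_pow_three_eq_self h30 (by exact_mod_cast hp)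
        (by exact_mod_cast hq))
      (Subring.isNilpotent_coe_iff.mp hw))
  exact ⟨P, ↑(p + q + w - P), by exact_mod_cast hP, Subring.isNilpotent_coe_iff.mpr hPn,
    Subring.commute_coe _ _, by push_cast; abel⟩

theorem isNilpotent_pow_five_sub_of_forall_exists
    (h : ∀ a : R, ∃ p w : R, p ^ 5 = p ∧ IsNilpotent w ∧ Commute p w ∧ a = p + w)
    (b : R) : IsNilpotent (b ^ 5 - b) := by
  obtain ⟨p, w, hp, hw, hpw, rfl⟩ := h b
  obtain ⟨T, _, hpT, hwT, -⟩ := exists_isMulCommutative_subring hpw hpw (.refl w)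
  lift p to T using hpT
  lift w to T using hwT
  have hp' : p ^ 5 = p := by exact_mod_cast hp
  have := isNilpotent_add_pow_five_sub (s := p) (by simp [hp']) (Subring.isNilpotent_coe_iff.mp hw)
  exact_mod_cast Subring.isNilpotent_coe_iff.mpr this

theorem zhouNilClean_of_forall_exists
    (h : ∀ a : R, ∃ p w : R, p ^ 5 = p ∧ IsNilpotent w ∧ Commute p w ∧ a = p + w) :
    ZhouNilClean R := by
  intro a
  obtain ⟨p, w, hp, hw, hpw, rfl⟩ := h a
  obtain ⟨T, _, hpT, hwT, -⟩ := exists_isMulCommutative_subring hpw hpw (.refl w)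
  lift p to T using hpT
  lift w to T using hwT
  obtain ⟨q₁, q₂, hq₁, hq₂, hpq⟩ := exists_two_tripotents_isNilpotent_sub (p := p)
    (fun b ↦ Subring.isNilpotent_coe_iff.mp
      (by exact_mod_cast isNilpotent_pow_five_sub_of_forall_exists h b))
    (by exact_mod_cast hp)
  have hn : IsNilpotent (p - (q₁ + q₂) + w) :=
    (Commute.all _ _).isNilpotent_add hpq (Subring.isNilpotent_coe_iff.mp hw)
  exact ⟨q₁, q₂, ↑(p - (q₁ + q₂) + w), by exact_mod_cast hq₁, by exact_mod_cast hq₂,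
    Subring.isNilpotent_coe_iff.mpr hn, Subring.commute_coe _ _,
    Subring.commute_coe _ _, Subring.commute_coe _ _, by push_cast; abel⟩

end Ring

theorem stmt_11 (R : Type*) [Ring R] :
    ZhouNilClean R ↔
      ∀ a : R, ∃ p w : R, p ^ 5 = p ∧ IsNilpotent w ∧ Commute p w ∧ a = p + w :=
  ⟨ZhouNilClean.exists_pow_five_eq_self_add, zhouNilClean_of_forall_exists⟩
end

section
/- Let R be a ring in which 7 is invertible and every square element is the sum of four idempotents and a nilpotent that pairwise commute. Then 30 is nilpotent in R. -/
/-!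
Take `x = 3`: then `9 = E + w` with `E` a sum of four commuting idempotents, `w` nilpotent.
On the corners cut out by an idempotent `e` commuting with `a`, the element `a + e` acts as
`a` and as `a + 1`, so a sum of `n` commuting idempotents is a root of the falling factorial
`X (X - 1) ⋯ (X - n)`. Evaluating this polynomial at `9 = E + w` instead of at `E` changes it
by a multiple of `w`, so `9 · 8 · 7 · 6 · 5 = 2⁴ · 3³ · 5 · 7` is nilpotent. Cancelling
the unit `7` leaves `2160 = 2⁴ · 3³ · 5`, which divides `30⁴`.
-/

open Polynomial

theorem mul_eval_eq_of_mul_eq {S : Type*} [CommRing S] {e x y : S} (h : e * x = e * y)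
    (p : S[X]) : e * p.eval x = e * p.eval y := by
  obtain ⟨c, hc⟩ := sub_dvd_eval_sub x y p
  linear_combination e * hc + c * h

theorem descPochhammer_eval_add_of_isIdempotentElem {S : Type*} [CommRing S] {a e : S} {n : ℕ}
    (ha : (descPochhammer S n).eval a = 0) (he : IsIdempotentElem e) :
    (descPochhammer S (n + 1)).eval (a + e) = 0 := by
  have hoff : (1 - e) * (descPochhammer S (n + 1)).eval (a + e) = 0 := by
    rw [mul_eval_eq_of_mul_eq (y := a) (by linear_combination -he.eq), descPochhammer_succ_eval,
      ha, zero_mul, mul_zero]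
  have hon : e * (descPochhammer S (n + 1)).eval (a + e) = 0 := by
    rw [mul_eval_eq_of_mul_eq (y := a + 1) (by linear_combination he.eq),
      descPochhammer_succ_left, eval_mul, eval_comp, eval_sub, eval_X, eval_one,
      add_sub_cancel_right, ha, mul_zero, mul_zero]
  linear_combination hoff + hon

theorem descPochhammer_eval_sum_isIdempotentElem {S ι : Type*} [CommRing S] (s : Finset ι)
    {e : ι → S} (he : ∀ i ∈ s, IsIdempotentElem (e i)) :
    (descPochhammer S (s.card + 1)).eval (∑ i ∈ s, e i) = 0 := by
  classical
  induction s using Finset.induction_on with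
  | empty => simp
  | insert i s hi ih =>
    rw [Finset.sum_insert hi, Finset.card_insert_of_notMem hi, add_comm (e i)]
    exact descPochhammer_eval_add_of_isIdempotentElem
      (ih fun j hj => he j (Finset.mem_insert_of_mem hj)) (he i (Finset.mem_insert_self i s))

theorem isNilpotent_descFactorial_of_natCast_eq_sum_add {S ι : Type*} [CommRing S]
    (s : Finset ι) {e : ι → S} (he : ∀ i ∈ s, IsIdempotentElem (e i)) {w : S}
    (hw : IsNilpotent w) {m : ℕ} (hm : (m : S) = ∑ i ∈ s, e i + w) :
    IsNilpotent (m.descFactorial (s.card + 1) : S) := by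
  have hsub := isNilpotent_aeval_sub_of_isNilpotent_sub (descPochhammer S (s.card + 1))
    (a := (m : S)) (b := ∑ i ∈ s, e i) (by rwa [hm, add_sub_cancel_left])
  rwa [coe_aeval_eq_eval, coe_aeval_eq_eval, descPochhammer_eval_sum_isIdempotentElem s he,
    sub_zero, descPochhammer_eval_eq_descFactorial] at hsub

open scoped IsMulCommutative in
theorem isNilpotent_descFactorial_of_pairwise_commute {R ι : Type*}
    [Ring R] [Fintype ι] {e : ι → R} (he : ∀ i, IsIdempotentElem (e i)) {w : R}
    (hw : IsNilpotent w) (hcomm : (insert w (Set.range e)).Pairwise Commute) {m : ℕ}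
    (hm : (m : R) = ∑ i, e i + w) :
    IsNilpotent (m.descFactorial (Fintype.card ι + 1) : R) := by
  set T := Subring.closure (insert w (Set.range e))
  have : IsMulCommutative T := Subring.isMulCommutative_closure fun x hx y hy =>
    (eq_or_ne x y).elim (fun hxy => hxy ▸ rfl) fun hxy => hcomm hx hy hxy
  have hwT : w ∈ T := Subring.subset_closure (Set.mem_insert w _)
  have heT (i : ι) : e i ∈ T := Subring.subset_closure (Set.mem_insert_of_mem w ⟨i, rfl⟩)
  have hT := isNilpotent_descFactorial_of_natCast_eq_sum_add (S := T) Finset.univ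
    (e := fun i => ⟨e i, heT i⟩) (fun i _ => Subtype.ext (he i)) (w := ⟨w, hwT⟩)
    ((IsNilpotent.map_iff (f := T.subtype) Subtype.val_injective).mp hw)
    (m := m) (Subtype.ext (by simpa using hm))
  simpa using hT.map T.subtype

theorem isNilpotent_natCast_of_dvd_pow {R : Type*} [Ring R] {a b k : ℕ}
    (ha : IsNilpotent (a : R)) (hab : a ∣ b ^ k) : IsNilpotent (b : R) := by
  obtain ⟨c, hc⟩ := hab
  refine IsNilpotent.of_pow (m := k) ?_
  rw [← Nat.cast_pow, hc, Nat.cast_mul]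
  exact (Nat.cast_commute a (c : R)).isNilpotent_mul_right ha

theorem stmt_13 (R : Type*) [Ring R] (h7 : IsUnit (7 : R))
    (h : ∀ x : R, ∃ e f g k w : R, IsIdempotentElem e ∧ IsIdempotentElem f ∧
      IsIdempotentElem g ∧ IsIdempotentElem k ∧ IsNilpotent w ∧
      Commute e f ∧ Commute e g ∧ Commute e k ∧ Commute e w ∧
      Commute f g ∧ Commute f k ∧ Commute f w ∧
      Commute g k ∧ Commute g w ∧ Commute k w ∧ x ^ 2 = e + f + g + k + w) :
    IsNilpotent (30 : R) := by
  obtain ⟨e, f, g, k, w, he, hf, hg, hk, hw, hef, heg, hek, hew, hfg, hfk, hfw, hgk, hgw, hkw,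
    hsq⟩ := h 3
  have hcomm : (insert w (Set.range ![e, f, g, k])).Pairwise Commute := by
    simp only [Matrix.range_cons, Matrix.range_empty, Set.union_empty, Set.singleton_union,
      Set.pairwise_insert_of_symm, Set.pairwise_singleton, Set.forall_mem_insert,
      Set.mem_singleton_iff, forall_eq, true_and]
    exact ⟨⟨⟨fun _ => hgk, fun _ => hfg, fun _ => hfk⟩,
      fun _ => hef, fun _ => heg, fun _ => hek⟩,
      fun _ => hew.symm, fun _ => hfw.symm, fun _ => hgw.symm, fun _ => hkw.symm⟩
  have h9 : ((9 : ℕ) : R) = ∑ i, ![e, f, g, k] i + w := by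
    simp [Fin.sum_univ_four, ← hsq]
    norm_num
  have h15120 : IsNilpotent ((2160 * 7 : ℕ) : R) := by
    simpa [Nat.descFactorial] using isNilpotent_descFactorial_of_pairwise_commute
      (by simp [Fin.forall_fin_succ, he, hf, hg, hk]) hw hcomm h9
  have h2160 : IsNilpotent ((2160 : ℕ) : R) := by
    rw [Nat.cast_mul] at h15120
    exact (h7.isNilpotent_mul_unit_of_commute_iff (Nat.cast_commute 2160 7)).mp h15120
  simpa using isNilpotent_natCast_of_dvd_pow h2160 (by norm_num : 2160 ∣ 30 ^ 4)
end

section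
/- A ring R is Zhou nil-clean if and only if every square element of R is the sum of a tripotent, an involution and a nilpotent that pairwise commute. -/
/-!
Let `f = X (X² - 1) (X² - 4)`. A commuting sum of two tripotents, or of a tripotent and an
involution, is killed by `f`; adding a commuting nilpotent keeps `f` of it nilpotent. So in
either direction `f(b)` is nilpotent for every `b` (for the square condition via the certificate
`f(b)² ∈ (30, f(b²), f((b + 1)²))`), and so is `30`, since `f(3) = 120` and `f(4) = 720`.

Conversely, let `f(b)` and `30` be nilpotent. In a domain quotient of the commutative ring
`ℤ[b]`, `30 = 0` and `b` is an integer in `[-2, 2]`, so every integer polynomial divisible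
by `30` at `-2, …, 2` is nilpotent at `b`. Chinese-remainder polynomials then make
`b ≡ (A - B (1 - A)) + (1 - 2 E)` modulo the nilradical with `A, B, E` idempotent there; lifting
the idempotents gives a tripotent `A - B (1 - A)` and an involution `1 - 2 E`, both tripotent.
-/

open Polynomial

/-- Its roots `-2, …, 2` are the sums of two elements of `{0, 1, -1}`. -/
noncomputable def tripotentSumPoly : ℤ[X] := X * (X ^ 2 - 1) * (X ^ 2 - 4)

@[simp] lemma aeval_tripotentSumPoly {A : Type*} [Ring A] (x : A) :
    aeval x tripotentSumPoly = x * (x ^ 2 - 1) * (x ^ 2 - 4) := by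
  simp [tripotentSumPoly, map_ofNat]

/-- Modulo the prime `p` it is `1` at `r` and `0` elsewhere, by Fermat's little theorem. -/
noncomputable def fermatIndicator (p : ℕ) (r : ℤ) : ℤ[X] := 1 - (X - C r) ^ (p - 1)

section CommRing

variable {S : Type*} [CommRing S]

lemma IsIdempotentElem.sub_mul_one_sub_pow_three {A B : S}
    (hA : IsIdempotentElem A) (hB : IsIdempotentElem B) :
    (A - B * (1 - A)) ^ 3 = A - B * (1 - A) := by
  have hB' : (B * (1 - A)) ^ 2 = B * (1 - A) := (hB.mul hA.one_sub).pow_succ_eq 1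
  have hAB : A * (B * (1 - A)) = 0 := by linear_combination (-B) * hA.eq
  linear_combination (A + 1) * hA.eq - (B * (1 - A) + 1) * hB' - 3 * (A - B * (1 - A)) * hAB

lemma IsIdempotentElem.one_sub_two_mul_sq {E : S} (hE : IsIdempotentElem E) :
    (1 - 2 * E) ^ 2 = 1 := by
  linear_combination 4 * hE.eq

lemma aeval_tripotentSumPoly_add_of_tripotent {p q : S} (hp : p ^ 3 = p) (hq : q ^ 3 = q) :
    aeval (p + q) tripotentSumPoly = 0 := by
  rw [aeval_tripotentSumPoly]
  linear_combination (p ^ 2 + 5 * p * q + 10 * q ^ 2 - 4) * hp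
    + (10 * p ^ 2 + 5 * p * q + q ^ 2 - 4) * hq

lemma isNilpotent_aeval_add {x w : S} {P : ℤ[X]} (hx : IsNilpotent (aeval x P))
    (hw : IsNilpotent w) : IsNilpotent (aeval (x + w) P) := by
  obtain ⟨c, hc⟩ := sub_dvd_eval_sub (x + w) x (P.map (algebraMap ℤ S))
  rw [eval_map_algebraMap, eval_map_algebraMap, add_sub_cancel_left] at hc
  rw [← sub_add_cancel (aeval (x + w) P) (aeval x P), hc]
  exact (Commute.all _ _).isNilpotent_add ((Commute.all _ _).isNilpotent_mul_right hw) hx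

lemma exists_intCast_eq_of_aeval_tripotentSumPoly_eq_zero [IsDomain S] {x : S}
    (hx : aeval x tripotentSumPoly = 0) : ∃ k ∈ Finset.Icc (-2 : ℤ) 2, x = k := by
  have h : (x + 2) * (x + 1) * x * (x - 1) * (x - 2) = 0 := by
    rw [aeval_tripotentSumPoly] at hx
    linear_combination hx
  simp only [mul_eq_zero, add_eq_zero_iff_eq_neg, sub_eq_zero] at h
  rcases h with (((h | h) | h) | h) | h
  · exact ⟨-2, by decide, by simp [h]⟩
  · exact ⟨-1, by decide, by simp [h]⟩
  · exact ⟨0, by decide, by simp [h]⟩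
  · exact ⟨1, by decide, by simp [h]⟩
  · exact ⟨2, by decide, by simp [h]⟩

lemma aeval_eq_zero_of_thirty_dvd [IsReduced S] {x : S} (h30 : (30 : S) = 0)
    (hx : aeval x tripotentSumPoly = 0) {P : ℤ[X]}
    (hP : ∀ k ∈ Finset.Icc (-2 : ℤ) 2, 30 ∣ P.eval k) : aeval x P = 0 := by
  refine IsReduced.eq_zero _ (nilpotent_iff_mem_prime.mpr fun J hJ ↦ ?_)
  rw [← Ideal.Quotient.eq_zero_iff_mem]
  set g := Ideal.Quotient.mk J
  have hg : ∀ y : S, ∀ Q : ℤ[X], g (aeval y Q) = aeval (g y) Q :=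
    fun y Q ↦ (aeval_algHom_apply g.toIntAlgHom y Q).symm
  obtain ⟨k, hk, hxk⟩ := exists_intCast_eq_of_aeval_tripotentSumPoly_eq_zero
    (by rw [← hg, hx, map_zero] : aeval (g x) tripotentSumPoly = 0)
  obtain ⟨m, hm⟩ := hP k hk
  rw [hg, hxk, aeval_def, eval₂_at_intCast, Int.cast_id, hm]
  simp [← map_ofNat g 30, h30]

lemma isIdempotentElem_aeval_of_thirty_dvd [IsReduced S] {x : S} (h30 : (30 : S) = 0)
    (hx : aeval x tripotentSumPoly = 0) {P : ℤ[X]}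
    (hP : ∀ k ∈ Finset.Icc (-2 : ℤ) 2, 30 ∣ (P * P - P).eval k) : IsIdempotentElem (aeval x P) := by
  have := aeval_eq_zero_of_thirty_dvd h30 hx hP
  rwa [map_sub, map_mul, sub_eq_zero] at this

lemma exists_idempotents_of_thirty_eq_zero [IsReduced S] {x : S} (h30 : (30 : S) = 0)
    (hx : aeval x tripotentSumPoly = 0) :
    ∃ A B E : S, IsIdempotentElem A ∧ IsIdempotentElem B ∧ IsIdempotentElem E ∧
      x = (A - B * (1 - A)) + (1 - 2 * E) := by
  -- `15, 10, 6` are the idempotents of `ℤ/30 ≅ 𝔽₂ × 𝔽₃ × 𝔽₅`. At residue `r` mod `p`, write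
  -- `r = t + v` with `t ∈ {0, ±1}`, `v = ±1`; `PA`, `PB`, `PE` indicate `t = 1`, `t = -1`, `v = -1`.
  let δ := fermatIndicator
  let PA : ℤ[X] := 15 * δ 2 0 + 6 * δ 5 2
  let PB : ℤ[X] := 10 * δ 3 0 + 6 * (δ 5 0 + δ 5 (-2))
  let PE : ℤ[X] := 10 * δ 3 (-1) + 6 * (δ 5 (-2) + δ 5 (-1))
  have hsum : aeval x (X - (PA - PB * (1 - PA)) - (1 - 2 * PE)) = 0 :=
    aeval_eq_zero_of_thirty_dvd h30 hx ?_
  refine ⟨aeval x PA, aeval x PB, aeval x PE, isIdempotentElem_aeval_of_thirty_dvd h30 hx ?_,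
    isIdempotentElem_aeval_of_thirty_dvd h30 hx ?_, isIdempotentElem_aeval_of_thirty_dvd h30 hx ?_,
    ?_⟩
  on_goal 4 =>
    simp only [map_sub, map_mul, map_one, map_ofNat, aeval_X] at hsum
    linear_combination hsum
  all_goals
    intro k hk
    obtain ⟨hk₁, hk₂⟩ := Finset.mem_Icc.mp hk
    interval_cases k <;> norm_num [PA, PB, PE, δ, fermatIndicator]

lemma exists_tripotent_add_involution_add_nilpotent_comm {a : S}
    (h30 : IsNilpotent (30 : S)) (ha : IsNilpotent (aeval a tripotentSumPoly)) :
    ∃ t v w : S, t ^ 3 = t ∧ v ^ 2 = 1 ∧ IsNilpotent w ∧ a = t + v + w := by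
  let π := Ideal.Quotient.mk (nilradical S)
  have hπ : ∀ y : S, π y = 0 ↔ IsNilpotent y := fun y ↦
    Ideal.Quotient.eq_zero_iff_mem.trans mem_nilradical
  have hlift : ∀ e, IsIdempotentElem e → ∃ e' : S, IsIdempotentElem e' ∧ π e' = e :=
    fun e ↦ exists_isIdempotentElem_eq_of_ker_isNilpotent π (fun y hy ↦ (hπ y).mp hy) e
      (Ideal.Quotient.mk_surjective e)
  have : IsReduced (S ⧸ nilradical S) :=
    (Ideal.isRadical_iff_quotient_reduced _).mp (Ideal.radical_isRadical ⊥)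
  obtain ⟨A₀, B₀, E₀, hA₀, hB₀, hE₀, hsum⟩ := exists_idempotents_of_thirty_eq_zero (x := π a)
    (by rw [← map_ofNat π]; exact (hπ 30).mpr h30)
    (by rw [← (hπ _).mpr ha]; exact aeval_algHom_apply π.toIntAlgHom a _)
  obtain ⟨A, hA, rfl⟩ := hlift A₀ hA₀
  obtain ⟨B, hB, rfl⟩ := hlift B₀ hB₀
  obtain ⟨E, hE, rfl⟩ := hlift E₀ hE₀
  refine ⟨A - B * (1 - A), 1 - 2 * E, a - (A - B * (1 - A)) - (1 - 2 * E),
    hA.sub_mul_one_sub_pow_three hB, hE.one_sub_two_mul_sq, (hπ _).mp ?_, by ring⟩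
  simp only [map_sub, map_mul, map_one, map_ofNat, hsum]
  ring

lemma isNilpotent_aeval_tripotentSumPoly_of_sq_comm {y : S} (h30 : IsNilpotent (30 : S))
    (h₀ : IsNilpotent (aeval (y ^ 2) tripotentSumPoly))
    (h₁ : IsNilpotent (aeval ((y + 1) ^ 2) tripotentSumPoly)) :
    IsNilpotent (aeval y tripotentSumPoly) := by
  rw [aeval_tripotentSumPoly, ← mem_nilradical] at *
  refine IsNilpotent.of_pow (m := 2) (mem_nilradical.mp ?_)
  have key : (y * (y ^ 2 - 1) * (y ^ 2 - 4)) ^ 2 =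
      30 * (-3 * y ^ 14 - 12 * y ^ 13 - 29 * y ^ 12 - 41 * y ^ 11 - 18 * y ^ 10 + 31 * y ^ 9
        + 62 * y ^ 8 + 39 * y ^ 7 - 6 * y ^ 6 - 19 * y ^ 5 - 8 * y ^ 4 + 2 * y ^ 3 + 2 * y ^ 2)
      + (-8 * y ^ 5 + 10 * y ^ 4 + 10 * y ^ 3 + 10 * y ^ 2 - 2 * y - 5)
        * (y ^ 2 * ((y ^ 2) ^ 2 - 1) * ((y ^ 2) ^ 2 - 4))
      + (8 * y ^ 5 - 10 * y ^ 3 + 2 * y)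
        * ((y + 1) ^ 2 * (((y + 1) ^ 2) ^ 2 - 1) * (((y + 1) ^ 2) ^ 2 - 4)) := by
    ring
  rw [key]
  exact add_mem (add_mem (Ideal.mul_mem_right _ _ h30) (Ideal.mul_mem_left _ _ h₀))
    (Ideal.mul_mem_left _ _ h₁)

end CommRing

lemma pow_three_eq_self_of_sq_eq_one {M : Type*} [Monoid M] {v : M} (hv : v ^ 2 = 1) :
    v ^ 3 = v := by
  rw [pow_succ, hv, one_mul]

section Ring

open scoped IsMulCommutative

variable {R : Type*} [Ring R]

lemma isNilpotent_natCast_of_dvd_pow_s17 {m n k : ℕ} (h : m ∣ n ^ k) (hm : IsNilpotent (m : R)) :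
    IsNilpotent (n : R) := by
  obtain ⟨c, hc⟩ := h
  refine IsNilpotent.of_pow (m := k) ?_
  rw [← Nat.cast_pow, hc, Nat.cast_mul]
  exact (Nat.cast_commute _ _).isNilpotent_mul_right hm

lemma Subalgebra.isNilpotent_aeval_coe_iff {T : Subalgebra ℤ R} (y : T) (P : ℤ[X]) :
    IsNilpotent (aeval (y : R) P) ↔ IsNilpotent (aeval y P) := by
  rw [← aeval_subalgebra_coe]
  exact IsNilpotent.map_iff (f := T.val) Subtype.val_injective

lemma isNilpotent_aeval_tripotentSumPoly_add {p q w : R} (hp : p ^ 3 = p) (hq : q ^ 3 = q)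
    (hw : IsNilpotent w) (hpq : Commute p q) (hpw : Commute p w) (hqw : Commute q w) :
    IsNilpotent (aeval (p + q + w) tripotentSumPoly) := by
  let T := Algebra.adjoin ℤ ({p, q, w} : Set R)
  have : IsMulCommutative T := Algebra.isMulCommutative_adjoin ℤ (by
    simp [hpq.eq, hpw.eq, hqw.eq])
  let p' : T := ⟨p, Algebra.subset_adjoin (by simp)⟩
  let q' : T := ⟨q, Algebra.subset_adjoin (by simp)⟩
  let w' : T := ⟨w, Algebra.subset_adjoin (by simp)⟩
  have hp' : p' ^ 3 = p' := Subtype.ext hp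
  have hq' : q' ^ 3 = q' := Subtype.ext hq
  have hw' : IsNilpotent w' := (IsNilpotent.map_iff Subtype.val_injective (f := T.val)).mp hw
  have key : IsNilpotent (aeval (p' + q' + w') tripotentSumPoly) := isNilpotent_aeval_add
    (by rw [aeval_tripotentSumPoly_add_of_tripotent hp' hq']; exact IsNilpotent.zero) hw'
  exact (Subalgebra.isNilpotent_aeval_coe_iff _ _).mpr key

lemma Subalgebra.isNilpotent_ofNat {T : Subalgebra ℤ R} (n : ℕ) [n.AtLeastTwo]
    (h : IsNilpotent (OfNat.ofNat n : R)) : IsNilpotent (OfNat.ofNat n : T) := by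
  rwa [← IsNilpotent.map_iff (f := T.val) Subtype.val_injective, map_ofNat]

lemma exists_tripotent_add_involution_add_nilpotent {b : R} (h30 : IsNilpotent (30 : R))
    (hb : IsNilpotent (aeval b tripotentSumPoly)) :
    ∃ t v w : R, t ^ 3 = t ∧ v ^ 2 = 1 ∧ IsNilpotent w ∧
      Commute t v ∧ Commute t w ∧ Commute v w ∧ b = t + v + w := by
  let T := Algebra.adjoin ℤ {b}
  let b' : T := ⟨b, Algebra.self_mem_adjoin_singleton ℤ b⟩
  obtain ⟨t, v, w, ht, hv, hw, hb'⟩ := exists_tripotent_add_involution_add_nilpotent_comm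
    (Subalgebra.isNilpotent_ofNat 30 h30) ((Subalgebra.isNilpotent_aeval_coe_iff b' _).mp hb)
  exact ⟨t, v, w, congrArg T.val ht, congrArg T.val hv, hw.map T.val, (Commute.all t v).map T.val,
    (Commute.all t w).map T.val, (Commute.all v w).map T.val, congrArg T.val hb'⟩

lemma isNilpotent_aeval_tripotentSumPoly_of_sq {b : R} (h30 : IsNilpotent (30 : R))
    (h₀ : IsNilpotent (aeval (b ^ 2) tripotentSumPoly))
    (h₁ : IsNilpotent (aeval ((b + 1) ^ 2) tripotentSumPoly)) :
    IsNilpotent (aeval b tripotentSumPoly) := by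
  let T := Algebra.adjoin ℤ {b}
  let b' : T := ⟨b, Algebra.self_mem_adjoin_singleton ℤ b⟩
  refine (Subalgebra.isNilpotent_aeval_coe_iff b' _).mpr
    (isNilpotent_aeval_tripotentSumPoly_of_sq_comm (Subalgebra.isNilpotent_ofNat 30 h30)
      ((Subalgebra.isNilpotent_aeval_coe_iff (b' ^ 2) _).mp h₀)
      ((Subalgebra.isNilpotent_aeval_coe_iff ((b' + 1) ^ 2) _).mp h₁))

end Ring

theorem stmt_17 (R : Type*) [Ring R] :
    ZhouNilClean R ↔
      ∀ x : R, ∃ p v w : R, p ^ 3 = p ∧ v ^ 2 = 1 ∧ IsNilpotent w ∧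
        Commute p v ∧ Commute p w ∧ Commute v w ∧ x ^ 2 = p + v + w := by
  constructor
  · intro h x
    have hF : ∀ b : R, IsNilpotent (aeval b tripotentSumPoly) := fun b ↦ by
      obtain ⟨p, q, w, hp, hq, hw, hpq, hpw, hqw, rfl⟩ := h b
      exact isNilpotent_aeval_tripotentSumPoly_add hp hq hw hpq hpw hqw
    have h30 : IsNilpotent (30 : R) := by
      refine isNilpotent_natCast_of_dvd_pow_s17 (m := 120) (k := 3) (by norm_num) ?_
      simpa [show (3 : R) * (3 ^ 2 - 1) * (3 ^ 2 - 4) = 120 by norm_num] using hF 3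
    exact exists_tripotent_add_involution_add_nilpotent h30 (hF (x ^ 2))
  · intro h a
    have hF : ∀ y : R, IsNilpotent (aeval (y ^ 2) tripotentSumPoly) := fun y ↦ by
      obtain ⟨p, v, w, hp, hv, hw, hpv, hpw, hvw, hy⟩ := h y
      rw [hy]
      exact isNilpotent_aeval_tripotentSumPoly_add hp (pow_three_eq_self_of_sq_eq_one hv) hw hpv hpw hvw
    have h30 : IsNilpotent (30 : R) := by
      refine isNilpotent_natCast_of_dvd_pow_s17 (m := 720) (k := 4) (by norm_num) ?_
      simpa [show (2 : R) ^ 2 * ((2 ^ 2) ^ 2 - 1) * ((2 ^ 2) ^ 2 - 4) = 720 by norm_num] using hF 2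
    obtain ⟨t, v, w, ht, hv, hw, htv, htw, hvw, rfl⟩ := exists_tripotent_add_involution_add_nilpotent
      h30 (isNilpotent_aeval_tripotentSumPoly_of_sq h30 (hF a) (hF (a + 1)))
    exact ⟨t, v, w, ht, pow_three_eq_self_of_sq_eq_one hv, hw, htv, htw, hvw, rfl⟩
end
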